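/- Let $(V,N)$ be a finite-dimensional $\mathbb{Z}$-graded complex vector space with a degree-$1$ endomorphism $N$, and let $S(V,N)$ be the space of degree-$(-1)$ linear endomorphisms $L$ of $V$ commuting with $N$. Then the map $S(V,N) \to S(\mathrm{Image}\,N, N|_{\mathrm{Image}\,N})$ sending $L$ to its restriction $L|_{\mathrm{Image}\,N}$ is surjective. -/
import Mathlib


/-- The degree-one endomorphism induced by `N` on the image pair
`(Image N, N|_{Image N})`; the degree-`(i+1)` component of `Image N`
is `range (N i) ⊆ V (i+1)`. -/
noncomputable def imageMap (V : ℤ → Type) [∀ i, AddCommGroup (V i)] [∀ i, Module ℂ (V i)]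
    (N : ∀ i, V i →ₗ[ℂ] V (i + 1)) (i : ℤ) :
    ↥(LinearMap.range (N i)) →ₗ[ℂ] ↥(LinearMap.range (N (i + 1))) :=
  LinearMap.codRestrict (LinearMap.range (N (i + 1)))
    ((N (i + 1)).domRestrict (LinearMap.range (N i)))
    (fun _ => LinearMap.mem_range_self _ _)

/-- Transport a linear map `V (a+1+1) →ₗ V (a+1)` along an equality `a + 1 = b`
to a linear map `V (b+1) →ₗ V b`. -/
noncomputable def trL (V : ℤ → Type) [∀ i, AddCommGroup (V i)] [∀ i, Module ℂ (V i)]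
    {a b : ℤ} (h : a + 1 = b) (f : V (a + 1 + 1) →ₗ[ℂ] V (a + 1)) :
    V (b + 1) →ₗ[ℂ] V b :=
  @Eq.rec ℤ (a + 1) (fun c _ => V (c + 1) →ₗ[ℂ] V c) f b h

/-- Let `(V,N)` be a finite-dimensional `ℤ`-graded complex vector space
with a degree-one endomorphism.  Every degree-`(-1)` endomorphism `L'` of the image pair
`(Image N, N|_{Image N})` commuting with the induced `N` extends to a degree-`(-1)`
endomorphism `L` of `V` commuting with `N`; that is, the restriction map
`S(V,N) → S(Image N, N|_{Image N})` is surjective. -/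
theorem restriction_to_image_surjective
    (V : ℤ → Type) [∀ i, AddCommGroup (V i)] [∀ i, Module ℂ (V i)]
    [∀ i, FiniteDimensional ℂ (V i)]
    (N : ∀ i, V i →ₗ[ℂ] V (i + 1))
    (L' : ∀ i : ℤ, ↥(LinearMap.range (N (i + 1))) →ₗ[ℂ] ↥(LinearMap.range (N i)))
    (hL' : ∀ (i : ℤ) (x : ↥(LinearMap.range (N (i + 1)))),
      imageMap V N i (L' i x) = L' (i + 1) (imageMap V N (i + 1) x)) :
    ∃ L : ∀ i : ℤ, V (i + 1) →ₗ[ℂ] V i,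
      (∀ (i : ℤ) (x : V (i + 1)), N i (L i x) = L (i + 1) (N (i + 1) x)) ∧
      (∀ (i : ℤ) (x : ↥(LinearMap.range (N (i + 1)))), L (i + 1) ↑x = ↑(L' i x)) := by
  -- choose projections onto the ranges
  have hπ' : ∀ i : ℤ, ∃ p : V (i + 1 + 1) →ₗ[ℂ] ↥(LinearMap.range (N (i + 1))),
      ∀ s : ↥(LinearMap.range (N (i + 1))), p ↑s = s := by
    intro i
    obtain ⟨q, hq⟩ := Submodule.exists_isCompl (LinearMap.range (N (i + 1)))
    exact ⟨(LinearMap.range (N (i + 1))).linearProjOfIsCompl q hq,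
      fun s => Submodule.linearProjOfIsCompl_apply_left hq s⟩
  choose π hπ using hπ'
  -- choose linear sections of the maps N onto their ranges
  have hσ' : ∀ i : ℤ, ∃ s : ↥(LinearMap.range (N (i + 1))) →ₗ[ℂ] V (i + 1),
      ∀ y : ↥(LinearMap.range (N (i + 1))), N (i + 1) (s y) = ↑y := by
    intro i
    obtain ⟨g, hg⟩ := (N (i + 1)).rangeRestrict.exists_rightInverse_of_surjective
      (by rw [LinearMap.range_eq_top]; exact (N (i + 1)).surjective_rangeRestrict)
    refine ⟨g, fun y => ?_⟩
    have h1 : (N (i + 1)).rangeRestrict (g y) = y := LinearMap.congr_fun hg y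
    calc N (i + 1) (g y) = ↑((N (i + 1)).rangeRestrict (g y)) := rfl
      _ = ↑y := by rw [h1]
  choose σ hσ using hσ'
  -- the candidate for `L (i+1)`
  set F : ∀ i : ℤ, V (i + 1 + 1) →ₗ[ℂ] V (i + 1) := fun i =>
    ((LinearMap.range (N i)).subtype ∘ₗ (L' i) ∘ₗ (π i))
      + ((σ i) ∘ₗ (L' (i + 1)) ∘ₗ (N (i + 1 + 1)).rangeRestrict ∘ₗ
          (LinearMap.id - (LinearMap.range (N (i + 1))).subtype ∘ₗ (π i))) with hF
  -- restriction property of F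
  have hF1 : ∀ (i : ℤ) (x : ↥(LinearMap.range (N (i + 1)))),
      F i ↑x = ↑(L' i x) := by
    intro i x
    simp only [hF, LinearMap.add_apply, LinearMap.comp_apply, LinearMap.sub_apply,
      LinearMap.id_apply, Submodule.coe_subtype, hπ i x, sub_self, map_zero,
      add_zero]
  -- commutation property of F
  have hF2 : ∀ (i : ℤ) (x : V (i + 1 + 1)),
      N (i + 1) (F i x) = ↑(L' (i + 1) ⟨N (i + 1 + 1) x, LinearMap.mem_range_self _ x⟩) := by
    intro i x
    have e1 : N (i + 1) ↑(L' i (π i x)) = ↑(imageMap V N i (L' i (π i x))) := rfl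
    have e2 : N (i + 1) ((σ i) ((L' (i + 1)) ((N (i + 1 + 1)).rangeRestrict (x - ↑(π i x)))))
        = ↑((L' (i + 1)) ((N (i + 1 + 1)).rangeRestrict (x - ↑(π i x)))) := hσ i _
    have e3 : imageMap V N (i + 1) (π i x) + (N (i + 1 + 1)).rangeRestrict (x - ↑(π i x))
        = ⟨N (i + 1 + 1) x, LinearMap.mem_range_self _ x⟩ := by
      apply Subtype.ext
      show N (i + 1 + 1) ↑(π i x) + N (i + 1 + 1) (x - ↑(π i x)) = N (i + 1 + 1) x
      rw [map_sub]; abel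
    calc N (i + 1) (F i x)
        = N (i + 1) ↑(L' i (π i x))
          + N (i + 1) ((σ i) ((L' (i + 1)) ((N (i + 1 + 1)).rangeRestrict (x - ↑(π i x))))) := by
          simp only [hF, LinearMap.add_apply, LinearMap.comp_apply, LinearMap.sub_apply,
            LinearMap.id_apply, Submodule.coe_subtype, map_add]
      _ = ↑(L' (i + 1) (imageMap V N (i + 1) (π i x)))
          + ↑((L' (i + 1)) ((N (i + 1 + 1)).rangeRestrict (x - ↑(π i x)))) := by
          rw [e1, e2, hL' i (π i x)]
      _ = ↑(L' (i + 1) (imageMap V N (i + 1) (π i x)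
            + (N (i + 1 + 1)).rangeRestrict (x - ↑(π i x)))) := by
          rw [map_add]; rfl
      _ = ↑(L' (i + 1) ⟨N (i + 1 + 1) x, LinearMap.mem_range_self _ x⟩) := by rw [e3]
  -- assemble L by transport
  refine ⟨fun j => trL V (Int.sub_add_cancel j 1) (F (j - 1)), ?_, ?_⟩
  · -- commutation; first establish the restriction property
    have h2 : ∀ (i : ℤ) (x : ↥(LinearMap.range (N (i + 1)))),
        (trL V (Int.sub_add_cancel (i + 1) 1) (F (i + 1 - 1))) ↑x = ↑(L' i x) := by
      intro i x
      have gen : ∀ (a : ℤ) (ea : a = i) (h : a + 1 = i + 1),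
          (trL V h (F a)) ↑x = ↑(L' i x) := by
        rintro a rfl h
        exact hF1 a x
      exact gen (i + 1 - 1) (by omega) _
    intro i x
    have hr := h2 i ⟨N (i + 1) x, LinearMap.mem_range_self _ x⟩
    have gen : ∀ (a : ℤ) (h : a + 1 = i),
        N i ((trL V h (F a)) x) = ↑(L' i ⟨N (i + 1) x, LinearMap.mem_range_self _ x⟩) := by
      intro a h
      subst h
      exact hF2 a x
    exact (gen (i - 1) (Int.sub_add_cancel i 1)).trans hr.symm
  · intro i x
    have gen : ∀ (a : ℤ) (ea : a = i) (h : a + 1 = i + 1),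
        (trL V h (F a)) ↑x = ↑(L' i x) := by
      rintro a rfl h
      exact hF1 a x
    exact gen (i + 1 - 1) (by omega) _
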